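/- arXiv:1811.04738 — 8 statements merged into one kernel-verified Lean document; each statement's English description precedes it below -/
import Mathlib

section
/- Let A be a uogas on a finite set X, let x be a maximal element (no A-successor), let y belong to the s(A)-connected component of x, and let p = (p(0),...,p(n)) be the unique injective s(A)-path from y to x. Then (p(i), p(i+1)) ∈ A for all i < n; that is, the path from any point to the maximal element of its component always follows the orientation of A. -/
/-!
Induct backwards from the end of the path. The last step must point to `x`, since `x` has no
successor. If step `i + 1` points forward but step `i` points backward, then `p i` and `p (i + 2)`
are both successors of `p (i + 1)`, hence equal, contradicting injectivity.
-/

theorem rel_succ_of_injective_path_to_maximal {X : Type*} {A : X → X → Prop}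
    (huo : ∀ x y z, A x y → A x z → y = z) {p : ℕ → X} {n : ℕ}
    (hpath : ∀ i < n, A (p i) (p (i + 1)) ∨ A (p (i + 1)) (p i))
    (hinj : ∀ i j, i ≤ n → j ≤ n → p i = p j → i = j)
    (hmax : ∀ z, ¬ A (p n) z) :
    ∀ i < n, A (p i) (p (i + 1)) := by
  suffices h : ∀ k i, i + k + 1 = n → A (p i) (p (i + 1)) from
    fun i hi => h (n - i - 1) i (by omega)
  intro k
  induction k with
  | zero =>
    intro i hi
    obtain rfl : n = i + 1 := by omega
    exact (hpath i (by omega)).resolve_right (hmax _)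
  | succ k ih =>
    intro i hi
    have hnext : A (p (i + 1)) (p (i + 2)) := ih (i + 1) (by omega)
    refine (hpath i (by omega)).resolve_right fun hback => ?_
    have := hinj i (i + 2) (by omega) (by omega) (huo _ _ _ hback hnext)
    omega

theorem stmt2_general {X : Type*} (A : X → X → Prop)
    (huo : ∀ x y z, A x y → A x z → y = z)
    (x y : X) (hmax : ∀ z, ¬ A x z)
    (p : ℕ → X) (n : ℕ)
    (hpn : p n = x)
    (hpath : ∀ i, i < n → (A (p i) (p (i+1)) ∨ A (p (i+1)) (p i)))
    (hinj : ∀ i j, i ≤ n → j ≤ n → p i = p j → i = j) :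
    ∀ i, i < n → A (p i) (p (i+1)) := by
  subst hpn
  exact rel_succ_of_injective_path_to_maximal huo hpath hinj hmax

/-- In a uogas on a finite set, the unique injective path (in the
symmetrization) from any point to the maximal element of its component follows
the orientation of `A`. -/
theorem stmt2 {X : Type*} [Finite X] (A : X → X → Prop)
    (hirr : ∀ x, ¬ A x x)
    (hanti : ∀ x y, A x y → A y x → x = y)
    (huo : ∀ x y z, A x y → A x z → y = z)
    (hacyc : ¬ ∃ (n : ℕ) (f : ℕ → X), 2 ≤ n ∧
      (∀ i j, i ≤ n → j ≤ n → f i = f j → i = j) ∧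
      (∀ i, i < n → (A (f i) (f (i+1)) ∨ A (f (i+1)) (f i))) ∧
      (A (f n) (f 0) ∨ A (f 0) (f n)))
    (x y : X) (hmax : ∀ z, ¬ A x z)
    (hconn : Relation.ReflTransGen (fun a b => A a b ∨ A b a) y x)
    (p : ℕ → X) (n : ℕ)
    (hp0 : p 0 = y) (hpn : p n = x)
    (hpath : ∀ i, i < n → (A (p i) (p (i+1)) ∨ A (p (i+1)) (p i)))
    (hinj : ∀ i j, i ≤ n → j ≤ n → p i = p j → i = j) :
    ∀ i, i < n → A (p i) (p (i+1)) :=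
  stmt2_general A huo x y hmax p n hpn hpath hinj
end

section
/- Let A be a uogas on a finite set X, let (y,x) ∈ A, and let p be the unique injective s(A)-path from y to the unique maximal element of the connected component of y. Then p has length at least 2 and p(1) = x. -/
/-!
The vertex `p n` has no successor, so the last edge of the path points forward. Going backwards,
a backward edge `p (i+1) → p i` next to a forward edge `p (i+1) → p (i+2)` would give `p (i+1)` two
successors, forcing `p i = p (i+2)` against injectivity. Hence every edge points forward, and
`p 1` is the unique successor of `p 0 = y`, namely `x`.
-/

section UniqueSuccessor

variable {X : Type*} {A : X → X → Prop}

theorem forward_of_adj_of_forward (huo : ∀ x y z, A x y → A x z → y = z) {a b c : X}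
    (hab : A a b ∨ A b a) (hbc : A b c) (hac : a ≠ c) : A a b :=
  hab.resolve_right fun hba => hac (huo b a c hba hbc)

theorem path_edge_forward_of_end_maximal (huo : ∀ x y z, A x y → A x z → y = z)
    {p : ℕ → X} {n : ℕ} (hpath : ∀ i, i < n → (A (p i) (p (i+1)) ∨ A (p (i+1)) (p i)))
    (hinj : ∀ i j, i ≤ n → j ≤ n → p i = p j → i = j) (hend : ∀ z, ¬ A (p n) z)
    {i : ℕ} (hi : i < n) : A (p i) (p (i+1)) := by
  refine Nat.decreasingInduction (motive := fun k _ => A (p k) (p (k+1)))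
    (fun k hk hnext => ?_) ?_ (Nat.le_sub_one_of_lt hi)
  · refine forward_of_adj_of_forward huo (hpath k (by omega)) hnext fun heq => ?_
    have := hinj k (k+1+1) (by omega) (by omega) heq
    omega
  · have hlast : n - 1 + 1 = n := by omega
    exact (hpath (n-1) (by omega)).resolve_right (hlast ▸ hend _)

end UniqueSuccessor

theorem stmt3_general {X : Type*} (A : X → X → Prop)
    (huo : ∀ x y z, A x y → A x z → y = z)
    (y x m : X) (hyx : A y x)
    (hmax : ∀ z, ¬ A m z)
    (p : ℕ → X) (n : ℕ)
    (hp0 : p 0 = y) (hpn : p n = m)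
    (hpath : ∀ i, i < n → (A (p i) (p (i+1)) ∨ A (p (i+1)) (p i)))
    (hinj : ∀ i j, i ≤ n → j ≤ n → p i = p j → i = j) :
    1 ≤ n ∧ p 1 = x := by
  have hend : ∀ z, ¬ A (p n) z := hpn ▸ hmax
  have hn : 1 ≤ n := Nat.one_le_iff_ne_zero.mpr fun h0 => hend x (by rwa [h0, hp0])
  have hfirst := path_edge_forward_of_end_maximal huo hpath hinj hend hn
  rw [hp0] at hfirst
  exact ⟨hn, huo y _ _ hfirst hyx⟩

/-- In a uogas on a finite set, if `(y,x) ∈ A` and `p` is the unique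
injective path (in the symmetrization) from `y` to the maximal element of its
component, then `p` has length at least 2 and `p 1 = x`. -/
theorem stmt3 {X : Type*} [Finite X] (A : X → X → Prop)
    (hirr : ∀ x, ¬ A x x)
    (hanti : ∀ x y, A x y → A y x → x = y)
    (huo : ∀ x y z, A x y → A x z → y = z)
    (hacyc : ¬ ∃ (n : ℕ) (f : ℕ → X), 2 ≤ n ∧
      (∀ i j, i ≤ n → j ≤ n → f i = f j → i = j) ∧
      (∀ i, i < n → (A (f i) (f (i+1)) ∨ A (f (i+1)) (f i))) ∧
      (A (f n) (f 0) ∨ A (f 0) (f n)))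
    (y x m : X) (hyx : A y x)
    (hm : Relation.ReflTransGen (fun a b => A a b ∨ A b a) y m)
    (hmax : ∀ z, ¬ A m z)
    (p : ℕ → X) (n : ℕ)
    (hp0 : p 0 = y) (hpn : p n = m)
    (hpath : ∀ i, i < n → (A (p i) (p (i+1)) ∨ A (p (i+1)) (p i)))
    (hinj : ∀ i j, i ≤ n → j ≤ n → p i = p j → i = j) :
    1 ≤ n ∧ p 1 = x :=
  stmt3_general A huo y x m hyx hmax p n hp0 hpn hpath hinj
end

section
/- Fix L ≥ 2. Define θ: {j ∈ ℕ | j ≥ 1} → {3k | k ≥ 1} by θ(j) = 3j if j ∉ (M_L ∪ (M_L + 1)), θ(j) = 3j + 3 if j ∈ M_L, and θ(j) = 3j − 3 if j ∈ M_L + 1, where M_L := {2^{31} · 3 · k | k ≥ 1, k ∉ P_L} and P_L := {2^p · 3^l | p ∈ ℕ, l < L − 2}. Then θ is a bijection from {j ≥ 1} onto {3k | k ≥ 1}. -/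
/-!
`θ = 3 · σ`, where `σ` exchanges `m` and `m + 1` for every `m ∈ M_L` and fixes everything else.
Since `M_L` consists of positive multiples of `3`, the pairs `{m, m + 1}` are disjoint and avoid `0`,
so `σ` is an involution of the positive integers; multiplication by `3` then carries them onto the
positive multiples of `3`.
-/

open scoped Classical

/-- `P_L := {2^p · 3^l | p ∈ ℕ, l < L − 2}` -/
def PL (L : ℕ) : Set ℕ := {m | ∃ p l : ℕ, l + 2 < L ∧ m = 2 ^ p * 3 ^ l}

/-- `M_L := {2^31 · 3 · k | k ≥ 1, k ∉ P_L}` -/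
def ML (L : ℕ) : Set ℕ := {m | ∃ k : ℕ, 1 ≤ k ∧ k ∉ PL L ∧ m = 2 ^ 31 * 3 * k}

/-- `θ(j) = 3j` if `j ∉ M_L ∪ (M_L+1)`, `3j+3` if `j ∈ M_L`, `3j−3` if `j ∈ M_L+1`. -/
noncomputable def theta (L j : ℕ) : ℕ :=
  if j ∈ ML L then 3 * j + 3
  else if j ∈ (fun m => m + 1) '' ML L then 3 * j - 3
  else 3 * j

open Set Function

noncomputable def swapSucc (S : Set ℕ) (j : ℕ) : ℕ :=
  if j ∈ S then j + 1
  else if j ∈ (fun m => m + 1) '' S then j - 1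
  else j

section swapSucc

variable {S : Set ℕ}

lemma swapSucc_of_mem {m : ℕ} (hm : m ∈ S) : swapSucc S m = m + 1 := if_pos hm

lemma swapSucc_succ_of_mem (hS : ∀ m ∈ S, m + 1 ∉ S) {m : ℕ} (hm : m ∈ S) :
    swapSucc S (m + 1) = m := by
  rw [swapSucc, if_neg (hS m hm), if_pos (mem_image_of_mem _ hm), Nat.add_sub_cancel]

lemma swapSucc_of_notMem {j : ℕ} (h₁ : j ∉ S) (h₂ : j ∉ (fun m => m + 1) '' S) :
    swapSucc S j = j := by
  rw [swapSucc, if_neg h₁, if_neg h₂]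

lemma swapSucc_involutive (hS : ∀ m ∈ S, m + 1 ∉ S) : Involutive (swapSucc S) := by
  intro j
  by_cases h₁ : j ∈ S
  · rw [swapSucc_of_mem h₁, swapSucc_succ_of_mem hS h₁]
  by_cases h₂ : j ∈ (fun m => m + 1) '' S
  · obtain ⟨m, hm, rfl⟩ := h₂
    rw [swapSucc_succ_of_mem hS hm, swapSucc_of_mem hm]
  · rw [swapSucc_of_notMem h₁ h₂, swapSucc_of_notMem h₁ h₂]

lemma swapSucc_mapsTo (hS₀ : 0 ∉ S) : MapsTo (swapSucc S) {j | 1 ≤ j} {j | 1 ≤ j} := by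
  intro j (hj : 1 ≤ j)
  by_cases h₁ : j ∈ S
  · simp [swapSucc_of_mem h₁]
  by_cases h₂ : j ∈ (fun m => m + 1) '' S
  · obtain ⟨m, hm, rfl⟩ := h₂
    show 1 ≤ swapSucc S (m + 1)
    rw [swapSucc, if_neg h₁, if_pos (mem_image_of_mem _ hm), Nat.add_sub_cancel]
    exact Nat.one_le_iff_ne_zero.mpr fun h => hS₀ (h ▸ hm)
  · simpa [swapSucc_of_notMem h₁ h₂] using hj

lemma swapSucc_bijOn (hS : ∀ m ∈ S, m + 1 ∉ S) (hS₀ : 0 ∉ S) :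
    BijOn (swapSucc S) {j | 1 ≤ j} {j | 1 ≤ j} :=
  InvOn.bijOn ⟨fun j _ => swapSucc_involutive hS j, fun j _ => swapSucc_involutive hS j⟩
    (swapSucc_mapsTo hS₀) (swapSucc_mapsTo hS₀)

end swapSucc

lemma succ_notMem_ML {L m : ℕ} (hm : m ∈ ML L) : m + 1 ∉ ML L := by
  rintro ⟨k', -, -, hk'⟩
  obtain ⟨k, -, -, rfl⟩ := hm
  omega

lemma zero_notMem_ML (L : ℕ) : 0 ∉ ML L := by
  rintro ⟨k, hk, -, h⟩
  omega

lemma theta_eq_three_mul_swapSucc (L j : ℕ) : theta L j = 3 * swapSucc (ML L) j := by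
  unfold theta swapSucc
  split_ifs with h₁ h₂
  · ring
  · obtain ⟨m, -, rfl⟩ := h₂
    omega
  · rfl

lemma bijOn_three_mul : BijOn (3 * ·) {k : ℕ | 1 ≤ k} {m | ∃ k, 1 ≤ k ∧ m = 3 * k} := by
  convert (mul_right_injective₀ three_ne_zero).injOn.bijOn_image (s := {k : ℕ | 1 ≤ k}) using 1
  ext m
  simp [eq_comm]

theorem stmt5_general (L : ℕ) :
    Set.BijOn (theta L) {j : ℕ | 1 ≤ j} {m : ℕ | ∃ k, 1 ≤ k ∧ m = 3 * k} := by
  have hθ : theta L = (3 * ·) ∘ swapSucc (ML L) := funext (theta_eq_three_mul_swapSucc L)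
  rw [hθ]
  exact bijOn_three_mul.comp (swapSucc_bijOn (fun _ => succ_notMem_ML) (zero_notMem_ML L))

/-- `θ` is a bijection from `{j ≥ 1}` onto `{3k | k ≥ 1}`. -/
theorem stmt5 (L : ℕ) (hL : 2 ≤ L) :
    Set.BijOn (theta L) {j : ℕ | 1 ≤ j} {m : ℕ | ∃ k, 1 ≤ k ∧ m = 3 * k} :=
  stmt5_general L
end

section
/- Fix L ≥ 2, with θ as defined from M_L and P_L. For every j ≥ 1, the quantity θ(j+1) − θ(j) belongs to {3, 6, −3} (as an integer). Consequently, for θ_n(k) defined by θ_n(k) = k if k ∉ S_n and θ_n(2^{q_n}·j) = 2^{q_n}·θ(j), one has θ_n(2^{q_n}·(j+1)) − θ_n(2^{q_n}·j) ≤ 3 · 2^{q_n + 1}. -/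
open scoped Classical

/-- `q 0 = 0`, `q (n+1) = 3·2^(q n)` -/
def q : ℕ → ℕ
  | 0 => 0
  | n + 1 => 3 * 2 ^ q n

/-- `S_n := {2^(q n) · j | j ≥ 1}` -/
def SN (n : ℕ) : Set ℕ := {k | ∃ j : ℕ, 1 ≤ j ∧ k = 2 ^ q n * j}

/-- `θ_n(k) = k` if `k ∉ S_n`, and `θ_n(2^(q n)·j) = 2^(q n)·θ(j)`. -/
noncomputable def thetaN (L n k : ℕ) : ℕ :=
  if 2 ^ q n ∣ k ∧ k ≠ 0 then 2 ^ q n * theta L (k / 2 ^ q n) else k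

lemma two_pow_mul_three_dvd_of_mem_ML {L m : ℕ} (hm : m ∈ ML L) : 2 ^ 31 * 3 ∣ m := by
  obtain ⟨k, -, -, rfl⟩ := hm
  exact dvd_mul_right _ k

lemma add_notMem_ML {L m d : ℕ} (hm : m ∈ ML L) (hd₀ : 0 < d) (hd : d < 2 ^ 31 * 3) :
    m + d ∉ ML L := fun hmd =>
  have hdvd : 2 ^ 31 * 3 ∣ d :=
    (Nat.dvd_add_right (two_pow_mul_three_dvd_of_mem_ML hm)).mp
      (two_pow_mul_three_dvd_of_mem_ML hmd)
  absurd (Nat.le_of_dvd hd₀ hdvd) (Nat.not_le.mpr hd)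

lemma succ_mem_image_succ_iff {s : Set ℕ} {j : ℕ} :
    j + 1 ∈ (fun m => m + 1) '' s ↔ j ∈ s :=
  (add_left_injective 1).mem_set_image

lemma theta_of_mem {L j : ℕ} (hj : j ∈ ML L) : theta L j = 3 * j + 3 := by
  rw [theta, if_pos hj]

lemma theta_succ_of_mem {L j : ℕ} (hj : j ∈ ML L) : theta L (j + 1) = 3 * j := by
  rw [theta, if_neg (add_notMem_ML hj one_pos (by norm_num)),
    if_pos (succ_mem_image_succ_iff.mpr hj)]
  omega

lemma theta_of_notMem {L j : ℕ} (hj : j ∉ ML L) (hj' : j ∉ (fun m => m + 1) '' ML L) :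
    theta L j = 3 * j := by
  rw [theta, if_neg hj, if_neg hj']

/-- Since `M_L` is spaced by `2^31 · 3`, at most one of `j - 1`, `j`, `j + 1` lies in `M_L`;
the four cases give the differences `6`, `-3`, `6`, `3`. -/
lemma theta_succ_sub_theta_mem (L j : ℕ) :
    ((theta L (j + 1) : ℤ) - theta L j) ∈ ({3, 6, -3} : Set ℤ) := by
  simp only [Set.mem_insert_iff, Set.mem_singleton_iff]
  by_cases hj : j ∈ ML L
  · rw [theta_succ_of_mem hj, theta_of_mem hj]
    omega
  by_cases hj' : j ∈ (fun m => m + 1) '' ML L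
  · obtain ⟨m, hm, rfl⟩ := hj'
    have hm₂ : m + 1 + 1 ∉ ML L := add_notMem_ML (d := 2) hm two_pos (by norm_num)
    have hm₂' : m + 1 + 1 ∉ (fun m => m + 1) '' ML L := by
      rw [succ_mem_image_succ_iff]; exact add_notMem_ML (d := 1) hm one_pos (by norm_num)
    rw [theta_succ_of_mem hm, theta_of_notMem hm₂ hm₂']
    omega
  have hj₁ : j + 1 ∉ (fun m => m + 1) '' ML L := by rwa [succ_mem_image_succ_iff]
  by_cases hs : j + 1 ∈ ML L
  · rw [theta_of_mem hs, theta_of_notMem hj hj']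
    omega
  · rw [theta_of_notMem hs hj₁, theta_of_notMem hj hj']
    omega

lemma thetaN_two_pow_mul {L n j : ℕ} (hj : j ≠ 0) :
    thetaN L n (2 ^ q n * j) = 2 ^ q n * theta L j := by
  have hpos : 0 < 2 ^ q n := Nat.two_pow_pos _
  rw [thetaN, if_pos ⟨dvd_mul_right _ j, Nat.mul_ne_zero hpos.ne' hj⟩,
    Nat.mul_div_cancel_left _ hpos]

theorem stmt7_general (L : ℕ) :
    (∀ j : ℕ, 1 ≤ j →
      ((theta L (j + 1) : ℤ) - (theta L j : ℤ)) ∈ ({3, 6, -3} : Set ℤ)) ∧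
    ∀ n j : ℕ, 1 ≤ j →
      ((thetaN L n (2 ^ q n * (j + 1)) : ℤ) - (thetaN L n (2 ^ q n * j) : ℤ))
        ≤ 3 * 2 ^ (q n + 1) := by
  refine ⟨fun j _ => theta_succ_sub_theta_mem L j, fun n j hj => ?_⟩
  have hstep : ((theta L (j + 1) : ℤ) - theta L j) ≤ 6 := by
    rcases theta_succ_sub_theta_mem L j with h | h | h <;> rw [h] <;> norm_num
  rw [thetaN_two_pow_mul j.succ_ne_zero, thetaN_two_pow_mul (by omega)]
  push_cast
  calc (2 : ℤ) ^ q n * theta L (j + 1) - 2 ^ q n * theta L j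
      = 2 ^ q n * ((theta L (j + 1) : ℤ) - theta L j) := by ring
    _ ≤ 2 ^ q n * 6 := by gcongr
    _ = 3 * 2 ^ (q n + 1) := by ring

/-- `θ(j+1) − θ(j) ∈ {3, 6, −3}`, hence
`θ_n(2^(q n)·(j+1)) − θ_n(2^(q n)·j) ≤ 3·2^(q n + 1)`. -/
theorem stmt7 (L : ℕ) (hL : 2 ≤ L) :
    (∀ j : ℕ, 1 ≤ j →
      ((theta L (j + 1) : ℤ) - (theta L j : ℤ)) ∈ ({3, 6, -3} : Set ℤ)) ∧
    ∀ n j : ℕ, 1 ≤ j →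
      ((thetaN L n (2 ^ q n * (j + 1)) : ℤ) - (thetaN L n (2 ^ q n * j) : ℤ))
        ≤ 3 * 2 ^ (q n + 1) :=
  stmt7_general L
end

section
/- Fix L ≥ 2 and define θ_n as above, and for a nonempty finite sequence s of natural numbers set θ_{s*} := θ_{s(1)} ∘ ... ∘ θ_{s(|s|−1)} (composition of the θ's along the tail of s). Then for every strictly decreasing sequence s ∈ ℕ^{<ω} with 2 ≤ |s| ≤ L, the set θ_{s*}[ℕ] ∩ S_{s(0)} is infinite. (Indeed, θ_{s*}(2^{q_{s(0)+r}}) = 2^{q_{s(0)+r}} · 3^{|s|−1} ∈ S_{s(0)} for every r ∈ ℕ.) -/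
open scoped Classical

/-- `θ_{s*} := θ_{s(1)} ∘ ... ∘ θ_{s(|s|−1)}`, the composition along the tail of `s`. -/
noncomputable def thetaComp (L : ℕ) (l : List ℕ) : ℕ → ℕ :=
  l.foldr (fun n f => thetaN L n ∘ f) id

lemma q_strictMono : StrictMono q := by
  apply strictMono_nat_of_lt_succ
  intro n
  calc q n < 2 ^ q n := Nat.lt_two_pow_self
  _ ≤ 3 * 2 ^ q n := by omega

lemma theta_eq (L a i : ℕ) (ha : 1 ≤ a) (hi : i + 1 < L) :
    theta L (2 ^ a * 3 ^ i) = 3 * (2 ^ a * 3 ^ i) := by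
  have hnotML : 2 ^ a * 3 ^ i ∉ ML L := by
    rintro ⟨k, hk1, hkP, hkeq⟩
    -- first: i ≥ 1
    have h3 : (3:ℕ) ∣ 2 ^ a * 3 ^ i := by rw [hkeq]; exact ⟨2 ^ 31 * k, by ring⟩
    have hi1 : 1 ≤ i := by
      by_contra h
      have : i = 0 := by omega
      subst this
      simp only [pow_zero, mul_one] at h3
      have := Nat.Prime.dvd_of_dvd_pow Nat.prime_three h3
      omega
    -- second: a ≥ 31
    have h2 : (2:ℕ) ^ 31 ∣ 2 ^ a * 3 ^ i := by rw [hkeq]; exact ⟨3 * k, by ring⟩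
    have hcop : Nat.Coprime (2 ^ 31) (3 ^ i) := Nat.Coprime.pow _ _ (by norm_num)
    have h2a : (2:ℕ) ^ 31 ∣ 2 ^ a := (Nat.Coprime.dvd_of_dvd_mul_right hcop) h2
    have ha31 : 31 ≤ a := by
      rcases le_or_gt 31 a with h | h
      · exact h
      · exfalso
        have := Nat.le_of_dvd (by positivity) h2a
        have := Nat.pow_lt_pow_right (show 1 < 2 by norm_num) h
        omega
    -- k = 2^(a-31) * 3^(i-1)
    have hk : k = 2 ^ (a - 31) * 3 ^ (i - 1) := by
      have e1 : (2:ℕ) ^ a = 2 ^ 31 * 2 ^ (a - 31) := by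
        rw [← pow_add]; congr 1; omega
      have e2 : (3:ℕ) ^ i = 3 * 3 ^ (i - 1) := by
        conv_lhs => rw [show i = 1 + (i - 1) by omega]
        rw [pow_add, pow_one]
      rw [e1, e2] at hkeq
      have : 2 ^ 31 * 3 * (2 ^ (a - 31) * 3 ^ (i - 1)) = 2 ^ 31 * 3 * k := by
        rw [← hkeq]; ring
      exact (Nat.eq_of_mul_eq_mul_left (by positivity) this).symm
    exact hkP ⟨a - 31, i - 1, by omega, hk⟩
  have hnotML1 : 2 ^ a * 3 ^ i ∉ (fun m => m + 1) '' ML L := by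
    rintro ⟨x, ⟨k, hk1, hkP, rfl⟩, hx⟩
    simp only at hx
    have heven : (2:ℕ) ∣ 2 ^ a * 3 ^ i := Dvd.dvd.mul_right (dvd_pow_self 2 (by omega)) _
    have heven2 : (2:ℕ) ∣ 2 ^ 31 * 3 * k := ⟨2 ^ 30 * 3 * k, by ring⟩
    omega
  unfold theta
  rw [if_neg hnotML, if_neg hnotML1]

lemma thetaN_eq (L n m i : ℕ) (hnm : n < m) (hi : i + 1 < L) :
    thetaN L n (2 ^ q m * 3 ^ i) = 2 ^ q m * 3 ^ (i + 1) := by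
  have hq : q n < q m := q_strictMono hnm
  have hdvd : (2:ℕ) ^ q n ∣ 2 ^ q m := pow_dvd_pow 2 hq.le
  unfold thetaN
  rw [if_pos ⟨hdvd.mul_right _, by positivity⟩]
  have hquot : 2 ^ q m * 3 ^ i / 2 ^ q n = 2 ^ (q m - q n) * 3 ^ i := by
    conv_lhs => rw [show q m = q n + (q m - q n) by omega, pow_add, mul_assoc]
    exact Nat.mul_div_cancel_left _ (by positivity)
  rw [hquot, theta_eq L _ i (by omega) hi]
  conv_rhs => rw [show q m = q n + (q m - q n) by omega]
  rw [pow_add]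
  ring

lemma comp_eq (L m : ℕ) : ∀ (l : List ℕ) (i : ℕ), (∀ n ∈ l, n < m) →
    i + l.length < L →
    thetaComp L l (2 ^ q m * 3 ^ i) = 2 ^ q m * 3 ^ (i + l.length) := by
  intro l
  induction l with
  | nil => intro i _ _; simp [thetaComp]
  | cons n l ih =>
    intro i hmem hlen
    have hc : thetaComp L (n :: l) = thetaN L n ∘ thetaComp L l := rfl
    rw [hc]
    simp only [Function.comp_apply]
    simp only [List.length_cons] at hlen
    rw [ih i (fun x hx => hmem x (List.mem_cons_of_mem _ hx)) (by omega)]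
    rw [thetaN_eq L n m _ (hmem n (List.mem_cons_self)) (by omega)]
    congr 1

/-- for strictly decreasing `s` with `2 ≤ |s| ≤ L`,
`θ_{s*}[ℕ] ∩ S_{s(0)}` is infinite; indeed
`θ_{s*}(2^(q (s 0 + r))) = 2^(q (s 0 + r)) · 3^(|s|−1) ∈ S_{s(0)}` for every `r`. -/
theorem stmt10 (L : ℕ) (hL : 2 ≤ L) (s : List ℕ)
    (hdec : List.Pairwise (· > ·) s) (hlen : 2 ≤ s.length) (hlenL : s.length ≤ L) :
    (Set.range (thetaComp L s.tail) ∩ SN s.headI).Infinite ∧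
    ∀ r : ℕ, thetaComp L s.tail (2 ^ q (s.headI + r))
        = 2 ^ q (s.headI + r) * 3 ^ (s.length - 1) ∧
      2 ^ q (s.headI + r) * 3 ^ (s.length - 1) ∈ SN s.headI := by
  obtain ⟨a, t, rfl⟩ : ∃ a t, s = a :: t := by
    cases s with
    | nil => simp at hlen
    | cons a t => exact ⟨a, t, rfl⟩
  simp only [List.headI, List.tail_cons, List.length_cons] at *
  have hmemlt : ∀ n ∈ t, n < a := fun n hn => (List.pairwise_cons.mp hdec).1 n hn
  have hkey : ∀ r : ℕ, thetaComp L t (2 ^ q (a + r)) = 2 ^ q (a + r) * 3 ^ t.length := by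
    intro r
    have := comp_eq L (a + r) t 0
      (fun n hn => lt_of_lt_of_le (hmemlt n hn) (Nat.le_add_right a r))
      (by omega)
    simpa using this
  have hmem : ∀ r : ℕ, 2 ^ q (a + r) * 3 ^ t.length ∈ SN a := by
    intro r
    refine ⟨2 ^ (q (a + r) - q a) * 3 ^ t.length, Nat.one_le_iff_ne_zero.mpr (by positivity), ?_⟩
    have : q a ≤ q (a + r) := q_strictMono.le_iff_le.mpr (Nat.le_add_right a r)
    rw [← mul_assoc, ← pow_add]
    congr 2
    omega
  have hext : t.length + 1 - 1 = t.length := by omega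
  constructor
  · refine Set.infinite_of_injective_forall_mem
      (f := fun r : ℕ => 2 ^ q (a + r) * 3 ^ t.length) ?_ ?_
    · intro r1 r2 h
      simp only at h
      have h3 : (0:ℕ) < 3 ^ t.length := by positivity
      have := Nat.eq_of_mul_eq_mul_right h3 h
      have := Nat.pow_right_injective (le_refl 2) this
      have := q_strictMono.injective this
      omega
    · intro r
      exact ⟨⟨2 ^ q (a + r), hkey r⟩, hmem r⟩
  · intro r
    rw [hext]
    exact ⟨hkey r, hmem r⟩
end

section
/- With g_n defined as in the L = 1 case (g_n(α)(k) = 1 if k = 2^{q_n}, g_n(α)(k) = α(θ_n(k)) otherwise), each g_n is a continuous, open, surjective map from the clopen set N_{t_n 0} onto the clopen set N_{t_n 1}, and the restriction of g_n to any nonempty open subset of N_{t_n 0} is not countable-to-one. -/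
/-- The case `L = 1`: `θ_n(k) = k` if `k ∉ S_n` and `θ_n(2^(q n)·j) = 2^(q n)·(2j+1)`. -/
def thetaN1 (n k : ℕ) : ℕ :=
  if 2 ^ q n ∣ k ∧ k ≠ 0 then 2 ^ q n * (2 * (k / 2 ^ q n) + 1) else k

/-- `t n`, as a function: `ψ(n)` (the `n`-th binary sequence in the
length-lexicographic enumeration, realized as the binary digits of `n+1`
after the leading 1) followed by zeros; `t n` has length `2^(q n)`. -/
def tFun (n i : ℕ) : Bool :=
  if i < Nat.log2 (n + 1) then (n + 1).testBit (Nat.log2 (n + 1) - 1 - i) else false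

/-- `g_n(α)(k) = 1` if `k = 2^(q n)`, and `g_n(α)(k) = α(θ_n(k))` otherwise. -/
def gB (n : ℕ) (α : ℕ → Bool) : ℕ → Bool :=
  fun k => if k = 2 ^ q n then true else α (thetaN1 n k)

/-- `α ∈ N_{t_n ε}`: `α` extends `t n` (of length `2^(q n)`) followed by the bit `b`. -/
def inN (n : ℕ) (b : Bool) (α : ℕ → Bool) : Prop :=
  (∀ i, i < 2 ^ q n → α i = tFun n i) ∧ α (2 ^ q n) = b

/-- The basic clopen set `N_{t_n b}` in Cantor space. -/
def Ncyl (n : ℕ) (b : Bool) : Set (ℕ → Bool) := {α | inN n b α}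

/- ----------------- auxiliary machinery ----------------- -/

lemma ppos (n : ℕ) : 0 < 2 ^ q n := Nat.pow_pos (by norm_num)

lemma not_smallmult {n i : ℕ} (h : i < 2 ^ q n) : ¬ (2 ^ q n ∣ i ∧ i ≠ 0) := by
  rintro ⟨hd, hne⟩
  exact absurd (Nat.le_of_dvd (Nat.pos_of_ne_zero hne) hd) (not_le.mpr h)

lemma theta_small {n i : ℕ} (h : i < 2 ^ q n) : thetaN1 n i = i := by
  rw [thetaN1, if_neg (not_smallmult h)]

lemma isClopen_cyl (i : ℕ) (c : Bool) : IsClopen {α : ℕ → Bool | α i = c} :=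
  (isClopen_discrete {c}).preimage (continuous_apply i)

lemma isClopen_Ncyl (n : ℕ) (b : Bool) : IsClopen (Ncyl n b) := by
  have h : Ncyl n b = (⋂ i ∈ Finset.range (2 ^ q n), {α : ℕ → Bool | α i = tFun n i}) ∩
      {α : ℕ → Bool | α (2 ^ q n) = b} := by
    ext α
    simp only [Ncyl, inN, Set.mem_setOf_eq, Set.mem_inter_iff, Set.mem_iInter,
      Finset.mem_range]
  rw [h]
  exact (isClopen_biInter_finset fun i _ => isClopen_cyl i _).inter (isClopen_cyl _ _)

lemma mapsTo_g (n : ℕ) : Set.MapsTo (gB n) (Ncyl n false) (Ncyl n true) := by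
  rintro α ⟨h1, _⟩
  refine ⟨fun i hi => ?_, ?_⟩
  · rw [show gB n α i = if i = 2 ^ q n then true else α (thetaN1 n i) from rfl,
      if_neg (Nat.ne_of_lt hi), theta_small hi]
    exact h1 i hi
  · simp [gB]

lemma cont_g (n : ℕ) : Continuous (gB n) := by
  apply continuous_pi
  intro k
  by_cases hk : k = 2 ^ q n
  · simpa [gB, hk] using (continuous_const : Continuous fun _ : ℕ → Bool => true)
  · simpa [gB, hk] using continuous_apply (thetaN1 n k)

/-- The local inverse used for surjectivity and openness. -/
def constructB (n : ℕ) (β fil : ℕ → Bool) (m : ℕ) : Bool :=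
  if m = 2 ^ q n then false
  else if ¬(2 ^ q n ∣ m ∧ m ≠ 0) then β m
  else if (m / 2 ^ q n) % 2 = 1 ∧ m ≠ 3 * 2 ^ q n then β (2 ^ q n * (m / 2 ^ q n / 2))
  else fil m

lemma gB_constructB (n : ℕ) (β fil : ℕ → Bool) (hβ : β (2 ^ q n) = true) :
    gB n (constructB n β fil) = β := by
  have hp : 0 < 2 ^ q n := ppos n
  funext k
  by_cases hk : k = 2 ^ q n
  · subst hk; simp [gB, hβ]
  · rw [show gB n (constructB n β fil) k
        = if k = 2 ^ q n then true else constructB n β fil (thetaN1 n k) from rfl, if_neg hk]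
    by_cases hd : 2 ^ q n ∣ k ∧ k ≠ 0
    · obtain ⟨j, hj⟩ := hd.1
      have hj0 : j ≠ 0 := by rintro rfl; exact hd.2 (by simp [hj])
      have hj1 : j ≠ 1 := by rintro rfl; exact hk (by simp [hj])
      have hdiv : k / 2 ^ q n = j := by rw [hj, Nat.mul_div_cancel_left _ hp]
      have hθ : thetaN1 n k = 2 ^ q n * (2 * j + 1) := by
        rw [thetaN1, if_pos hd, hdiv]
      have hlt : ∀ a b : ℕ, a < b → 2 ^ q n * (2 * j + 1) = 2 ^ q n * a → a = 2*j+1 := by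
        intro a b _ h
        exact (Nat.eq_of_mul_eq_mul_left hp h.symm)
      have h1 : 2 ^ q n * (2 * j + 1) ≠ 2 ^ q n := by
        intro h
        have := Nat.eq_of_mul_eq_mul_left hp (h.trans (mul_one (2 ^ q n)).symm)
        omega
      have h3 : 2 ^ q n * (2 * j + 1) ≠ 3 * 2 ^ q n := by
        intro h
        have : 2 ^ q n * (2 * j + 1) = 2 ^ q n * 3 := by omega
        have := Nat.eq_of_mul_eq_mul_left hp this
        omega
      have hdiv2 : 2 ^ q n * (2 * j + 1) / 2 ^ q n = 2 * j + 1 :=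
        Nat.mul_div_cancel_left _ hp
      rw [hθ, constructB, if_neg h1,
        if_neg (not_not_intro ⟨dvd_mul_right _ _, Nat.mul_ne_zero hp.ne' (by omega)⟩),
        if_pos ⟨by rw [hdiv2]; omega, h3⟩, hdiv2]
      have : (2 * j + 1) / 2 = j := by omega
      rw [this, ← hj]
    · rw [thetaN1, if_neg hd]
      have hk' : k ≠ 2 ^ q n := hk
      rw [constructB, if_neg hk', if_pos hd]

lemma inN_constructB (n : ℕ) (β fil : ℕ → Bool)
    (h1 : ∀ i, i < 2 ^ q n → β i = tFun n i) :
    inN n false (constructB n β fil) := by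
  constructor
  · intro i hi
    rw [constructB, if_neg (Nat.ne_of_lt hi), if_pos (not_smallmult hi)]
    exact h1 i hi
  · rw [constructB, if_pos rfl]

lemma constructB_agree (n N : ℕ) (α β' : ℕ → Bool) (hα : inN n false α)
    (hββ' : ∀ i, i < N → β' i = gB n α i) :
    ∀ i, i < N → constructB n β' α i = α i := by
  intro i hi
  have hp : 0 < 2 ^ q n := ppos n
  by_cases h0 : i = 2 ^ q n
  · rw [constructB, if_pos h0, h0, hα.2]
  by_cases hd : 2 ^ q n ∣ i ∧ i ≠ 0
  · obtain ⟨j, hj⟩ := hd.1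
    have hdiv : i / 2 ^ q n = j := by rw [hj, Nat.mul_div_cancel_left _ hp]
    by_cases hodd : (i / 2 ^ q n) % 2 = 1 ∧ i ≠ 3 * 2 ^ q n
    · rw [constructB, if_neg h0, if_neg (not_not_intro hd), if_pos hodd, hdiv]
      have hne0 : j ≠ 0 := by rintro rfl; exact hd.2 (by simp [hj])
      have hne1 : j ≠ 1 := by rintro rfl; exact h0 (by simp [hj])
      have hne3 : j ≠ 3 := by
        rintro rfl
        exact hodd.2 (by rw [hj]; ring)
      have hjo : j % 2 = 1 := by rw [hdiv] at hodd; exact hodd.1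
      have hj'2 : 2 ≤ j / 2 := by omega
      have hjodd : j = 2 * (j / 2) + 1 := by omega
      have hlt : 2 ^ q n * (j / 2) < N := by
        have h' : 2 ^ q n * (j / 2) < 2 ^ q n * j := (Nat.mul_lt_mul_left hp).mpr (by omega)
        omega
      rw [hββ' _ hlt]
      have hne : 2 ^ q n * (j / 2) ≠ 2 ^ q n := by
        intro h
        have := Nat.eq_of_mul_eq_mul_left hp (h.trans (mul_one (2 ^ q n)).symm)
        omega
      rw [show gB n α (2 ^ q n * (j / 2))
          = if 2 ^ q n * (j / 2) = 2 ^ q n then true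
            else α (thetaN1 n (2 ^ q n * (j / 2))) from rfl, if_neg hne]
      have hθ : thetaN1 n (2 ^ q n * (j / 2)) = i := by
        rw [thetaN1,
          if_pos ⟨dvd_mul_right _ _, Nat.mul_ne_zero hp.ne' (by omega)⟩,
          Nat.mul_div_cancel_left _ hp, hj]
        congr 1
        omega
      rw [hθ]
    · rw [constructB, if_neg h0, if_neg (not_not_intro hd), if_neg hodd]
  · rw [constructB, if_neg h0, if_pos hd, hββ' i hi,
      show gB n α i = if i = 2 ^ q n then true else α (thetaN1 n i) from rfl,
      if_neg h0, thetaN1, if_neg hd]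

/-- The injection into a fiber. -/
def injF (n N : ℕ) (α x : ℕ → Bool) (m : ℕ) : Bool :=
  if 2 * 2 ^ q n ∣ m ∧ N + 1 ≤ m / (2 * 2 ^ q n) then x (m / (2 * 2 ^ q n) - (N + 1))
  else α m

lemma injF_spec (n N : ℕ) (α x : ℕ → Bool) (j : ℕ) :
    injF n N α x (2 * 2 ^ q n * (N + 1 + j)) = x j := by
  have hp : 0 < 2 * 2 ^ q n := by positivity
  rw [injF, if_pos ⟨dvd_mul_right _ _, by rw [Nat.mul_div_cancel_left _ hp]; omega⟩,
    Nat.mul_div_cancel_left _ hp]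
  congr 1
  omega

lemma injF_small (n N : ℕ) (α x : ℕ → Bool) {i : ℕ}
    (hi : i ≤ 2 ^ q n ∨ i < N) : injF n N α x i = α i := by
  rw [injF, if_neg]
  rintro ⟨hd, hge⟩
  have hp : 0 < 2 * 2 ^ q n := by positivity
  have key : 2 * 2 ^ q n * (N + 1) ≤ i := by
    calc 2 * 2 ^ q n * (N + 1) ≤ 2 * 2 ^ q n * (i / (2 * 2 ^ q n)) :=
          Nat.mul_le_mul_left _ hge
      _ = i := Nat.mul_div_cancel' hd
  have hP : 1 ≤ 2 ^ q n := ppos n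
  have c1 : 2 ^ q n < 2 * 2 ^ q n * (N + 1) := by nlinarith
  have c2 : N < 2 * 2 ^ q n * (N + 1) := by nlinarith
  rcases hi with hi | hi
  · exact absurd hi (not_le.mpr (lt_of_lt_of_le c1 key))
  · exact absurd hi (not_lt.mpr (le_of_lt (lt_of_lt_of_le c2 key)))

lemma injF_gB (n N : ℕ) (α x : ℕ → Bool) : gB n (injF n N α x) = gB n α := by
  have hp : 0 < 2 ^ q n := ppos n
  funext k
  by_cases hk : k = 2 ^ q n
  · simp [gB, hk]
  · rw [show gB n (injF n N α x) k
        = if k = 2 ^ q n then true else injF n N α x (thetaN1 n k) from rfl,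
      show gB n α k = if k = 2 ^ q n then true else α (thetaN1 n k) from rfl,
      if_neg hk, if_neg hk]
    rw [injF, if_neg]
    rintro ⟨hd, hge⟩
    by_cases hc : 2 ^ q n ∣ k ∧ k ≠ 0
    · rw [thetaN1, if_pos hc] at hd
      obtain ⟨c, hcc⟩ := hd
      have : 2 ^ q n * (2 * (k / 2 ^ q n) + 1) = 2 ^ q n * (2 * c) := by
        rw [hcc]; ring
      have := Nat.eq_of_mul_eq_mul_left hp this
      omega
    · rw [thetaN1, if_neg hc] at hd hge
      have hpk : 2 ^ q n ∣ k := (dvd_mul_left (2 ^ q n) 2).trans hd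
      push_neg at hc
      have hk0 : k = 0 := hc hpk
      subst hk0
      simp at hge

lemma not_countable_univ_cantor : ¬ (Set.univ : Set (ℕ → Bool)).Countable := by
  intro h
  rw [Set.countable_univ_iff] at h
  obtain ⟨f, hf⟩ := exists_surjective_nat (ℕ → Bool)
  obtain ⟨m, hm⟩ := hf (fun k => !(f k k))
  have := congrFun hm m
  simp at this

lemma cylinder_subset {U : Set (ℕ → Bool)} (hU : IsOpen U) {α : ℕ → Bool} (hα : α ∈ U) :
    ∃ N, ∀ γ : ℕ → Bool, (∀ i, i < N → γ i = α i) → γ ∈ U := by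
  obtain ⟨I, u, hu, hsub⟩ := isOpen_pi_iff.mp hU α hα
  refine ⟨I.sup id + 1, fun γ hγ => hsub fun i hi => ?_⟩
  have hi' : i ∈ I := hi
  rw [hγ i (Nat.lt_succ_of_le (Finset.le_sup (f := id) hi'))]
  exact (hu i hi').2

theorem stmt13 (n : ℕ) :
    IsClopen (Ncyl n false) ∧ IsClopen (Ncyl n true) ∧
    Set.MapsTo (gB n) (Ncyl n false) (Ncyl n true) ∧
    ContinuousOn (gB n) (Ncyl n false) ∧
    Set.SurjOn (gB n) (Ncyl n false) (Ncyl n true) ∧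
    (∀ U : Set (ℕ → Bool), IsOpen U → IsOpen (gB n '' (U ∩ Ncyl n false))) ∧
    ∀ U : Set (ℕ → Bool), IsOpen U → (U ∩ Ncyl n false).Nonempty →
      ∃ β : ℕ → Bool, ¬ ((U ∩ Ncyl n false) ∩ (gB n) ⁻¹' {β}).Countable := by
  refine ⟨isClopen_Ncyl n false, isClopen_Ncyl n true, mapsTo_g n,
    (cont_g n).continuousOn, ?_, ?_, ?_⟩
  · -- SurjOn
    intro β hβ
    have hβ' : inN n true β := hβ
    exact ⟨constructB n β (fun _ => false),
      inN_constructB n β _ hβ'.1, gB_constructB n β _ hβ'.2⟩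
  · -- open map
    intro U hU
    rw [isOpen_iff_forall_mem_open]
    rintro β ⟨α, ⟨hαU, hαN⟩, rfl⟩
    obtain ⟨N, hN⟩ := cylinder_subset hU hαU
    have hαN' : inN n false α := hαN
    refine ⟨{β' | ∀ i, i < N → β' i = gB n α i} ∩ Ncyl n true, ?_, ?_, ?_⟩
    · rintro β' ⟨hβ'1, hβ'2⟩
      have hβ'2' : inN n true β' := hβ'2
      exact ⟨constructB n β' α,
        ⟨hN _ (constructB_agree n N α β' hαN' hβ'1), inN_constructB n β' α hβ'2'.1⟩,
        gB_constructB n β' α hβ'2'.2⟩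
    · refine IsOpen.inter ?_ (isClopen_Ncyl n true).isOpen
      have h : {β' : ℕ → Bool | ∀ i, i < N → β' i = gB n α i}
          = ⋂ i ∈ Finset.range N, {β' : ℕ → Bool | β' i = gB n α i} := by
        ext β'
        simp [Set.mem_iInter]
      rw [h]
      exact isOpen_biInter_finset fun i _ => (isClopen_cyl i _).isOpen
    · exact ⟨fun i _ => rfl, mapsTo_g n hαN⟩
  · -- fibers not countable
    rintro U hU ⟨α, hαU, hαN⟩
    obtain ⟨N, hN⟩ := cylinder_subset hU hαU
    have hαN' : inN n false α := hαN
    refine ⟨gB n α, fun hcount => ?_⟩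
    have hinj : Function.Injective (injF n N α) := by
      intro x y hxy
      funext j
      have h := congrFun hxy (2 * 2 ^ q n * (N + 1 + j))
      rwa [injF_spec, injF_spec] at h
    have hmem : ∀ x, injF n N α x ∈ (U ∩ Ncyl n false) ∩ gB n ⁻¹' {gB n α} := by
      intro x
      refine ⟨⟨hN _ (fun i hi => injF_small n N α x (Or.inr hi)), ?_, ?_⟩, ?_⟩
      · intro i hi
        rw [injF_small n N α x (Or.inl hi.le)]
        exact hαN'.1 i hi
      · rw [injF_small n N α x (Or.inl le_rfl)]
        exact hαN'.2
      · exact injF_gB n N α x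
    have huniv : injF n N α ⁻¹' ((U ∩ Ncyl n false) ∩ gB n ⁻¹' {gB n α}) = Set.univ :=
      Set.eq_univ_of_forall hmem
    exact not_countable_univ_cantor (huniv ▸ hcount.preimage hinj)
end

section
/- Let X be a nonempty Polish space and (f_n) a sequence of partial continuous open maps on X with open domains, such that the diagonal Δ(X) is contained in the closure of A^f := ⋃_n Graph(f_n) but disjoint from A^f. Then A^f is a Σ⁰₂ digraph on X with uncountable Borel chromatic number. -/
open Set Topology Filter

/-- The graph of a function continuous on an open set `D`, restricted over a closed
subset `C ⊆ D`, is closed. -/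
lemma stmt15_closedGraphOver {X : Type*} [TopologicalSpace X] [T2Space X]
    {f : X → X} {D C : Set X} (hD : IsOpen D) (hC : IsClosed C) (hCD : C ⊆ D)
    (hf : ContinuousOn f D) :
    IsClosed {p : X × X | p.1 ∈ C ∧ p.2 = f p.1} := by
  rw [← isOpen_compl_iff, isOpen_iff_mem_nhds]
  rintro ⟨x, y⟩ hp
  simp only [mem_compl_iff, mem_setOf_eq, not_and] at hp
  by_cases hx : x ∈ C
  · have hy : f x ≠ y := fun h => hp hx h.symm
    have hcont : ContinuousAt f x := (hf x (hCD hx)).continuousAt (hD.mem_nhds (hCD hx))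
    obtain ⟨u, v, hu, hv, hfu, hyv, huv⟩ := t2_separation hy
    have hN : (f ⁻¹' u) ×ˢ v ∈ 𝓝 ((x, y) : X × X) :=
      prod_mem_nhds (hcont.preimage_mem_nhds (hu.mem_nhds hfu)) (hv.mem_nhds hyv)
    refine Filter.mem_of_superset hN ?_
    rintro ⟨a, b⟩ ⟨ha, hb⟩ ⟨-, hab⟩
    exact huv.ne_of_mem ha hb hab.symm
  · have hN : (Cᶜ ×ˢ (univ : Set X)) ∈ 𝓝 ((x, y) : X × X) :=
      prod_mem_nhds (hC.isOpen_compl.mem_nhds hx) univ_mem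
    refine Filter.mem_of_superset hN ?_
    rintro ⟨a, b⟩ ⟨ha, -⟩ ⟨haC, -⟩
    exact ha haC

/-- Preimage of a closed set with empty interior under a continuous open partial map,
intersected with an open subset of the domain, is nowhere dense. -/
lemma stmt15_nwdPre {X : Type*} [TopologicalSpace X]
    {f : X → X} {D W C : Set X} (hD : IsOpen D) (hW : IsOpen W) (hWD : W ⊆ D)
    (hf : ContinuousOn f D) (hopen : ∀ U : Set X, IsOpen U → IsOpen (f '' (U ∩ D)))
    (hC : IsClosed C) (hCn : interior C = ∅) :
    IsNowhereDense (f ⁻¹' C ∩ W) := by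
  set T := f ⁻¹' C ∩ W with hT
  rw [IsNowhereDense]
  by_contra h
  obtain ⟨x, hx⟩ := nonempty_iff_ne_empty.mpr h
  set V := interior (closure T) with hV
  -- V meets W
  have hxW : x ∈ closure W := closure_mono inter_subset_right (interior_subset hx)
  obtain ⟨z, hzV, hzW⟩ : (V ∩ W).Nonempty := by
    have := mem_closure_iff.mp hxW V isOpen_interior hx
    exact this
  -- closure T ∩ W ⊆ T
  have hsub : closure T ∩ W ⊆ T := by
    rintro w ⟨hwT, hwW⟩
    refine ⟨?_, hwW⟩
    by_contra hfw
    have hcont : ContinuousAt f w := (hf w (hWD hwW)).continuousAt (hD.mem_nhds (hWD hwW))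
    have hnb : f ⁻¹' Cᶜ ∈ 𝓝 w := hcont.preimage_mem_nhds (hC.isOpen_compl.mem_nhds hfw)
    obtain ⟨t, htc, htT⟩ := mem_closure_iff_nhds.mp hwT (f ⁻¹' Cᶜ) hnb
    exact htc htT.1
  have hV'T : V ∩ W ⊆ T := fun w hw => hsub ⟨interior_subset hw.1, hw.2⟩
  have hopenV' : IsOpen (f '' ((V ∩ W) ∩ D)) := hopen _ ((isOpen_interior.inter hW))
  have himg : f '' ((V ∩ W) ∩ D) ⊆ C := by
    rintro _ ⟨w, ⟨hw, -⟩, rfl⟩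
    exact (hV'T hw).1
  have hy : f z ∈ interior C :=
    interior_maximal himg hopenV' ⟨z, ⟨⟨hzV, hzW⟩, hWD hzW⟩, rfl⟩
  rw [hCn] at hy
  exact hy

/-- for a complex situation `(X, (f_n))`, the digraph
`A^f = ⋃_n Graph(f_n)` is `Σ⁰₂` (a countable union of closed sets), irreflexive,
and has uncountable Borel chromatic number. -/
theorem stmt15 {X : Type*} [TopologicalSpace X] [PolishSpace X]
    [MeasurableSpace X] [BorelSpace X] [Nonempty X]
    (D : ℕ → Set X) (f : ℕ → X → X)
    (hD : ∀ n, IsOpen (D n))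
    (hrange : ∀ n, IsOpen (f n '' D n))
    (hcont : ∀ n, ContinuousOn (f n) (D n))
    (hopen : ∀ n, ∀ U : Set X, IsOpen U → IsOpen (f n '' (U ∩ D n)))
    (Af : Set (X × X))
    (hAf : Af = ⋃ n, {p : X × X | p.1 ∈ D n ∧ p.2 = f n p.1})
    (hdiag : ∀ x : X, (x, x) ∈ closure Af ∧ (x, x) ∉ Af) :
    (∃ F : ℕ → Set (X × X), (∀ n, IsClosed (F n)) ∧ Af = ⋃ n, F n) ∧
    (∀ x : X, (x, x) ∉ Af) ∧
    ¬ ∃ c : X → ℕ, Measurable c ∧ ∀ p ∈ Af, c p.1 ≠ c p.2 := by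
  letI := TopologicalSpace.upgradeIsCompletelyMetrizable X
  refine ⟨?_, fun x => (hdiag x).2, ?_⟩
  · -- Σ⁰₂
    have h := fun n => (hD n).exists_iUnion_isClosed
    choose C hCc hCsub hCU _ using h
    refine ⟨fun k => {p : X × X | p.1 ∈ C k.unpair.1 k.unpair.2 ∧ p.2 = f k.unpair.1 p.1},
      fun k => stmt15_closedGraphOver (hD _) (hCc _ _) (hCsub _ _) (hcont _), ?_⟩
    rw [Set.iUnion_unpair (fun i j => {p : X × X | p.1 ∈ C i j ∧ p.2 = f i p.1}), hAf]
    apply iUnion_congr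
    intro n
    ext p
    simp only [mem_setOf_eq, mem_iUnion]
    constructor
    · rintro ⟨hp1, hp2⟩
      rw [← hCU n] at hp1
      obtain ⟨m, hm⟩ := mem_iUnion.mp hp1
      exact ⟨m, hm, hp2⟩
    · rintro ⟨m, hm, hp2⟩
      exact ⟨(hCU n) ▸ mem_iUnion.mpr ⟨m, hm⟩, hp2⟩
  · -- uncountable Borel chromatic number
    rintro ⟨c, hc, hcol⟩
    set B : ℕ → Set X := fun k => c ⁻¹' {k} with hB
    have hBm : ∀ k, MeasurableSet (B k) := fun k => hc (measurableSet_singleton k)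
    -- some color class is non-meager
    obtain ⟨k, hk⟩ : ∃ k, ¬ IsMeagre (B k) := by
      by_contra h
      push_neg at h
      have hcover : (⋃ k, B k) = univ := by
        ext x; simp [hB]
      have hmg : IsMeagre (univ : Set X) := hcover ▸ isMeagre_iUnion h
      rw [IsMeagre, compl_univ] at hmg
      obtain ⟨x⟩ := ‹Nonempty X›
      obtain ⟨y, hy⟩ := (dense_of_mem_residual hmg).nonempty
      exact hy
    obtain ⟨U, hU, hBU⟩ := ((hBm k).baireMeasurableSet).residualEq_isOpen
    -- the set where B k and U agree is residual
    set E : Set X := {x | (x ∈ B k) = (x ∈ U)} with hE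
    have hEres : E ∈ residual X := hBU
    have hEc : IsMeagre Eᶜ := by rw [IsMeagre, compl_compl]; exact hEres
    -- U is nonempty
    have hUne : U.Nonempty := by
      rcases eq_empty_or_nonempty U with rfl | h
      · exfalso
        apply hk
        apply hEc.mono
        intro x hx
        simp only [hE, mem_compl_iff, mem_setOf_eq, eq_iff_iff] at hx ⊢
        intro hiff
        exact (hiff.mp hx).elim
      · exact h
    obtain ⟨x, hxU⟩ := hUne
    -- find a graph point inside U × U
    have hxcl := (hdiag x).1
    obtain ⟨p, hpUU, hpA⟩ :=
      mem_closure_iff_nhds.mp hxcl (U ×ˢ U) (prod_mem_nhds (hU.mem_nhds hxU) (hU.mem_nhds hxU))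
    rw [hAf] at hpA
    simp only [mem_iUnion, mem_setOf_eq] at hpA
    obtain ⟨n, hpD, hpf⟩ := hpA
    -- the open set W
    set W : Set X := U ∩ (D n ∩ f n ⁻¹' U) with hW
    have hWo : IsOpen W := hU.inter ((hcont n).isOpen_inter_preimage (hD n) hU)
    have hWD : W ⊆ D n := fun z hz => hz.2.1
    have hyW : p.1 ∈ W := ⟨hpUU.1, hpD, mem_preimage.mpr (hpf ▸ hpUU.2)⟩
    -- Bad1 : points of W not in B k
    have hBad1 : IsMeagre (W \ B k) := by
      apply hEc.mono
      rintro z ⟨hzW, hzB⟩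
      simp only [hE, mem_compl_iff, mem_setOf_eq, eq_iff_iff]
      intro hiff
      exact hzB (hiff.mpr hzW.1)
    -- Bad2 : points of W whose image is not in B k
    have hBad2 : IsMeagre (W ∩ f n ⁻¹' Eᶜ) := by
      obtain ⟨S, hSnwd, hScnt, hSsub⟩ :=
        isMeagre_iff_countable_union_isNowhereDense.mp hEc
      rw [isMeagre_iff_countable_union_isNowhereDense]
      refine ⟨(fun t => f n ⁻¹' closure t ∩ W) '' S, ?_, hScnt.image _, ?_⟩
      · rintro _ ⟨t, htS, rfl⟩
        exact stmt15_nwdPre (hD n) hWo hWD (hcont n) (hopen n) isClosed_closure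
          (hSnwd t htS)
      · rintro z ⟨hzW, hzE⟩
        obtain ⟨t, htS, hft⟩ := hSsub hzE
        exact ⟨f n ⁻¹' closure t ∩ W, ⟨t, htS, rfl⟩, subset_closure hft, hzW⟩
    -- W is not meager
    have hWnm : ¬ IsMeagre W := by
      intro hmg
      have hd := dense_of_mem_residual hmg
      obtain ⟨z, hz1, hz2⟩ := hd.inter_open_nonempty W hWo ⟨p.1, hyW⟩
      exact hz2 hz1
    -- find the good point
    have hWsub : W ⊆ (W \ B k) ∪ (W ∩ f n ⁻¹' Eᶜ) ∪
        {z ∈ W | z ∈ B k ∧ f n z ∈ B k} := by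
      intro z hzW
      by_cases hz1 : z ∈ B k
      · by_cases hz2 : f n z ∈ B k
        · exact Or.inr ⟨hzW, hz1, hz2⟩
        · refine Or.inl (Or.inr ⟨hzW, ?_⟩)
          simp only [hE, mem_compl_iff, mem_setOf_eq, eq_iff_iff]
          intro hiff
          exact hz2 (hiff.mpr hzW.2.2)
      · exact Or.inl (Or.inl ⟨hzW, hz1⟩)
    have hGood : {z ∈ W | z ∈ B k ∧ f n z ∈ B k}.Nonempty := by
      rcases eq_empty_or_nonempty {z ∈ W | z ∈ B k ∧ f n z ∈ B k} with he | h
      · exfalso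
        apply hWnm
        have hBadU : IsMeagre ((W \ B k) ∪ (W ∩ f n ⁻¹' Eᶜ)) := by
          rw [IsMeagre, compl_union]
          exact Filter.inter_mem hBad1 hBad2
        apply hBadU.mono
        intro z hz
        rcases hWsub hz with h' | h'
        · exact h'
        · rw [he] at h'; exact h'.elim
      · exact h
    obtain ⟨z, hzW, hzB, hfzB⟩ := hGood
    have hzA : ((z, f n z) : X × X) ∈ Af := by
      rw [hAf]
      exact mem_iUnion.mpr ⟨n, hzW.2.1, rfl⟩
    have := hcol (z, f n z) hzA
    simp only [hB, mem_preimage, mem_singleton_iff] at hzB hfzB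
    exact this (hzB.trans hfzB.symm)
end

section
/- Let (X, (f_n)) be a complex situation in which X is zero-dimensional and all domains D_n are clopen, let V be a nonempty open subset of X, and let m ∈ ℕ. Then there exist n > m and nonempty clopen sets V_0, V_1 ⊆ X with V_0 ⊆ V ∩ D_n and V_1 ⊆ V ∩ f_n[V_0]. -/
/-!
Pick `x ∈ V`. The graphs of the `f n` are closed, and none of them meets the diagonal, so the
finitely many graphs with `n ≤ m` can be discarded: `(x, x)` lies in the closure of the union of
the graphs with `n > m`. Hence `V ×ˢ V` meets one of these graphs, at a point `(y, f n y)`.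
Zero-dimensionality gives a clopen `V₀ ∋ y` inside `V ∩ D n`, and, `f n` being open, a clopen
`V₁ ∋ f n y` inside `V ∩ f n '' V₀`.
-/

open Set

theorem isClosed_setOf_mem_and_eq_apply {X Y : Type*} [TopologicalSpace X] [TopologicalSpace Y]
    [T2Space Y] {D : Set X} {f : X → Y} (hD : IsClosed D) (hf : ContinuousOn f D) :
    IsClosed {p : X × Y | p.1 ∈ D ∧ p.2 = f p.1} := by
  have hDY : IsClosed (D ×ˢ (univ : Set Y)) := hD.prod isClosed_univ
  convert hDY.isClosed_eq continuousOn_snd (hf.comp continuousOn_fst fun p hp => hp.1) using 1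
  ext p
  simp

theorem mem_closure_biUnion_gt_of_notMem_iUnion {α : Type*} [TopologicalSpace α] {s : ℕ → Set α}
    (hs : ∀ n, IsClosed (s n)) {x : α} (hx : x ∈ closure (⋃ n, s n)) (hx' : x ∉ ⋃ n, s n)
    (m : ℕ) : x ∈ closure (⋃ n > m, s n) := by
  have hsplit : (⋃ n, s n) = (⋃ n ∈ {n | n ≤ m}, s n) ∪ ⋃ n > m, s n := by
    ext y
    simp only [mem_iUnion, mem_union, mem_ofPred_eq, exists_prop]
    exact ⟨fun ⟨n, hn⟩ => (le_or_gt n m).imp (fun h => ⟨n, h, hn⟩) (fun h => ⟨n, h, hn⟩),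
      by rintro (⟨n, -, hn⟩ | ⟨n, -, hn⟩) <;> exact ⟨n, hn⟩⟩
  have hfin : IsClosed (⋃ n ∈ {n | n ≤ m}, s n) :=
    (finite_le_nat m).isClosed_biUnion fun n _ => hs n
  rw [hsplit, closure_union, hfin.closure_eq] at hx
  refine hx.resolve_left fun h => hx' ?_
  obtain ⟨n, -, hn⟩ := mem_iUnion₂.1 h
  exact mem_iUnion.2 ⟨n, hn⟩

theorem stmt17_general {X : Type*} [TopologicalSpace X] [PolishSpace X]
    (hzero : ∀ (x : X) (U : Set X), IsOpen U → x ∈ U →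
      ∃ C : Set X, IsClopen C ∧ x ∈ C ∧ C ⊆ U)
    (D : ℕ → Set X) (f : ℕ → X → X)
    (hD : ∀ n, IsClopen (D n))
    (hcont : ∀ n, ContinuousOn (f n) (D n))
    (hopen : ∀ n, ∀ U : Set X, IsOpen U → IsOpen (f n '' (U ∩ D n)))
    (hdiag : ∀ x : X,
      (x, x) ∈ closure (⋃ n, {p : X × X | p.1 ∈ D n ∧ p.2 = f n p.1}) ∧
      (x, x) ∉ ⋃ n, {p : X × X | p.1 ∈ D n ∧ p.2 = f n p.1})
    (V : Set X) (hV : IsOpen V) (hVne : V.Nonempty) (m : ℕ) :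
    ∃ n > m, ∃ V0 V1 : Set X, IsClopen V0 ∧ IsClopen V1 ∧
      V0.Nonempty ∧ V1.Nonempty ∧ V0 ⊆ V ∩ D n ∧ V1 ⊆ V ∩ f n '' V0 := by
  obtain ⟨x, hxV⟩ := hVne
  have hx := mem_closure_biUnion_gt_of_notMem_iUnion
    (fun n => isClosed_setOf_mem_and_eq_apply (hD n).isClosed (hcont n)) (hdiag x).1 (hdiag x).2 m
  obtain ⟨p, ⟨hp₁V, hp₂V⟩, hpG⟩ := mem_closure_iff.1 hx (V ×ˢ V) (hV.prod hV) ⟨hxV, hxV⟩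
  obtain ⟨n, hnm, hpD, hpf⟩ := mem_iUnion₂.1 hpG
  obtain ⟨V0, hV0, hpV0, hV0sub⟩ := hzero p.1 (V ∩ D n) (hV.inter (hD n).isOpen) ⟨hp₁V, hpD⟩
  have himage : IsOpen (f n '' V0) := by
    simpa [inter_eq_left.2 fun y hy => (hV0sub hy).2] using hopen n V0 hV0.isOpen
  obtain ⟨V1, hV1, hfpV1, hV1sub⟩ :=
    hzero (f n p.1) (V ∩ f n '' V0) (hV.inter himage) ⟨hpf ▸ hp₂V, mem_image_of_mem _ hpV0⟩
  exact ⟨n, hnm, V0, V1, hV0, hV1, ⟨p.1, hpV0⟩, ⟨f n p.1, hfpV1⟩, hV0sub, hV1sub⟩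

/-- in a complex situation with `X` zero-dimensional and all
domains clopen, for every nonempty open `V ⊆ X` and every `m` there are
`n > m` and nonempty clopen `V_0 ⊆ V ∩ D_n`, `V_1 ⊆ V ∩ f_n[V_0]`. -/
theorem stmt17 {X : Type*} [TopologicalSpace X] [PolishSpace X] [Nonempty X]
    (hzero : ∀ (x : X) (U : Set X), IsOpen U → x ∈ U →
      ∃ C : Set X, IsClopen C ∧ x ∈ C ∧ C ⊆ U)
    (D : ℕ → Set X) (f : ℕ → X → X)
    (hD : ∀ n, IsClopen (D n))
    (hrange : ∀ n, IsOpen (f n '' D n))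
    (hcont : ∀ n, ContinuousOn (f n) (D n))
    (hopen : ∀ n, ∀ U : Set X, IsOpen U → IsOpen (f n '' (U ∩ D n)))
    (hdiag : ∀ x : X,
      (x, x) ∈ closure (⋃ n, {p : X × X | p.1 ∈ D n ∧ p.2 = f n p.1}) ∧
      (x, x) ∉ ⋃ n, {p : X × X | p.1 ∈ D n ∧ p.2 = f n p.1})
    (V : Set X) (hV : IsOpen V) (hVne : V.Nonempty) (m : ℕ) :
    ∃ n > m, ∃ V0 V1 : Set X, IsClopen V0 ∧ IsClopen V1 ∧
      V0.Nonempty ∧ V1.Nonempty ∧ V0 ⊆ V ∩ D n ∧ V1 ⊆ V ∩ f n '' V0 :=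
  stmt17_general hzero D f hD hcont hopen hdiag V hV hVne m
end
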